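/- Weakening/substitutivity for α-equivalence: if Δ ⊢ Δ'σ (i.e., Δ ⊢ a#(Xσ) for every a#X ∈ Δ'), then Δ' ⊢ s ≈α t implies Δ ⊢ sσ ≈α tσ. -/

import Mathlib

/-! Nominal terms: atoms, permutations, terms, actions, freshness, α-equivalence,
nominal rewriting and nominal algebra, closed rewriting. -/

abbrev Atom := ℕ
abbrev Unknown := ℕ

/-- Finitely supported permutations of atoms. -/
def FinPerm := {π : Equiv.Perm Atom // {a | π a ≠ a}.Finite}

namespace FinPerm

instance : CoeFun FinPerm (fun _ => Atom → Atom) := ⟨fun π => π.1⟩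

def id : FinPerm := ⟨Equiv.refl Atom, by simp⟩

/-- `comp π π'` is `π ∘ π'` (first apply `π'`, then `π`). -/
def comp (π π' : FinPerm) : FinPerm :=
  ⟨π'.1.trans π.1, ((π.2.union π'.2).subset (by
    intro a ha
    simp only [Set.mem_setOf_eq, Equiv.trans_apply] at ha
    by_cases h : π'.1 a = a
    · exact Or.inl (by simpa [h] using ha)
    · exact Or.inr h))⟩

def inv (π : FinPerm) : FinPerm :=
  ⟨π.1.symm, π.2.subset (by
    intro a ha h
    exact ha (π.1.symm_apply_eq.mpr h.symm))⟩

def swap (a b : Atom) : FinPerm :=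
  ⟨Equiv.swap a b, (Set.toFinite {a, b}).subset (by
    intro c hc
    by_contra h
    simp only [Set.mem_insert_iff, Set.mem_singleton_iff, not_or] at h
    exact hc (Equiv.swap_apply_of_ne_of_ne h.1 h.2))⟩

/-- The (finite) set of atoms moved by `π`. -/
noncomputable def nontriv (π : FinPerm) : Finset Atom := π.2.toFinset

end FinPerm

/-- Nominal terms: atoms, moderated unknowns `π·X`, abstractions `[a]t`,
and term-formers applied to lists of arguments. -/
inductive Term : Type where
  | atom : Atom → Term
  | var  : FinPerm → Unknown → Term
  | abs  : Atom → Term → Term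
  | app  : ℕ → List Term → Term

/-- Permutation action on terms. -/
def permAct (π : FinPerm) : Term → Term
  | .atom a => .atom (π a)
  | .var π' X => .var (π.comp π') X
  | .abs a t => .abs (π a) (permAct π t)
  | .app f ts => .app f (ts.attach.map fun t => permAct π t.1)
decreasing_by
  all_goals simp_wf
  have := List.sizeOf_lt_of_mem t.2
  omega

/-- Substitutions, represented as total maps (the default value of `X` is `id·X`). -/
def Subst := Unknown → Term

/-- A substitution has finite domain. -/
def Subst.FinDom (σ : Subst) : Prop := {X | σ X ≠ .var FinPerm.id X}.Finite

/-- Substitution action on terms. -/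
def subst (σ : Subst) : Term → Term
  | .atom a => .atom a
  | .var π X => permAct π (σ X)
  | .abs a t => .abs a (subst σ t)
  | .app f ts => .app f (ts.attach.map fun t => subst σ t.1)
decreasing_by
  all_goals simp_wf
  have := List.sizeOf_lt_of_mem t.2
  omega

/-- Composition of substitutions: `(σ.comp θ) X = (Xσ)θ`. -/
def Subst.comp (σ θ : Subst) : Subst := fun X => subst θ (σ X)

/-- `σ∘π`, mapping `X` to `π·(σ X)`. -/
def Subst.permComp (σ : Subst) (π : FinPerm) : Subst := fun X => permAct π (σ X)

mutual
/-- Atoms occurring in a term. -/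
noncomputable def atmsF : Term → Finset Atom
  | .atom a => {a}
  | .var π _ => π.nontriv
  | .abs a t => insert a (atmsF t)
  | .app _ ts => atmsLF ts
noncomputable def atmsLF : List Term → Finset Atom
  | [] => ∅
  | t :: ts => atmsF t ∪ atmsLF ts
end

mutual
/-- Unknowns occurring in a term. -/
def unknF : Term → Finset Unknown
  | .atom _ => ∅
  | .var _ X => {X}
  | .abs _ t => unknF t
  | .app _ ts => unknLF ts
def unknLF : List Term → Finset Unknown
  | [] => ∅
  | t :: ts => unknF t ∪ unknLF ts
end

/-- Freshness contexts: finite sets of primitive constraints `a#X`. -/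
abbrev Ctx := Finset (Atom × Unknown)

def ctxAtoms (Δ : Ctx) : Finset Atom := Δ.image Prod.fst
def ctxUnkns (Δ : Ctx) : Finset Unknown := Δ.image Prod.snd

/-- Derivable freshness judgements `Δ ⊢ a # t`. -/
inductive Fresh (Δ : Ctx) : Atom → Term → Prop where
  | atom {a b} : a ≠ b → Fresh Δ a (.atom b)
  | var {a π X} : (π.inv a, X) ∈ Δ → Fresh Δ a (.var π X)
  | absSame {a t} : Fresh Δ a (.abs a t)
  | absDiff {a b t} : a ≠ b → Fresh Δ a t → Fresh Δ a (.abs b t)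
  | app {a f ts} : (∀ t ∈ ts, Fresh Δ a t) → Fresh Δ a (.app f ts)

/-- Derivable α-equivalence judgements `Δ ⊢ s ≈α t`. -/
inductive Aeq (Δ : Ctx) : Term → Term → Prop where
  | atom {a} : Aeq Δ (.atom a) (.atom a)
  | var {π π' : FinPerm} {X : Unknown} : (∀ a : Atom, (π : Atom → Atom) a ≠ (π' : Atom → Atom) a → (a, X) ∈ Δ) →
      Aeq Δ (.var π X) (.var π' X)
  | absSame {a t u} : Aeq Δ t u → Aeq Δ (.abs a t) (.abs a u)
  | absDiff {a b t u} : a ≠ b → Fresh Δ b t → Aeq Δ (permAct (FinPerm.swap b a) t) u →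
      Aeq Δ (.abs a t) (.abs b u)
  | app {f ts us} : ts.length = us.length → (∀ p ∈ ts.zip us, Aeq Δ p.1 p.2) →
      Aeq Δ (.app f ts) (.app f us)

/-- Subterm relation. -/
inductive Subterm : Term → Term → Prop where
  | refl (t) : Subterm t t
  | abs {s t a} : Subterm s t → Subterm s (.abs a t)
  | app {s t f ts} : t ∈ ts → Subterm s t → Subterm s (.app f ts)

mutual
/-- Number of occurrences of the unknown `X` in a term. -/
def countUnk (X : Unknown) : Term → ℕ
  | .atom _ => 0
  | .var _ Y => if Y = X then 1 else 0
  | .abs _ t => countUnk X t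
  | .app _ ts => countUnkL X ts
def countUnkL (X : Unknown) : List Term → ℕ
  | [] => 0
  | t :: ts => countUnk X t + countUnkL X ts
end

/-- A position: a term with a distinguished unknown occurring exactly once, as `id·X`. -/
structure Position where
  ctx : Term
  hole : Unknown
  once : countUnk hole ctx = 1
  idOnly : ∀ π : FinPerm, Subterm (.var π hole) ctx → π = FinPerm.id

def fillAux (X : Unknown) (u : Term) : Term → Term
  | .atom a => .atom a
  | .var π Y => if Y = X then u else .var π Y
  | .abs a t => .abs a (fillAux X u t)
  | .app f ts => .app f (ts.attach.map fun t => fillAux X u t.1)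
decreasing_by
  all_goals simp_wf
  have := List.sizeOf_lt_of_mem t.2
  omega

/-- `C[u]`: place `u` in the hole of the position `C`. -/
def Position.fill (C : Position) (u : Term) : Term := fillAux C.hole u C.ctx

/-- A rule `∇ ⊢ l → r` (also used for axioms `∇ ⊢ l = r`). -/
structure Rule where
  ctx : Ctx
  lhs : Term
  rhs : Term

noncomputable def Rule.atms (R : Rule) : Finset Atom := ctxAtoms R.ctx ∪ atmsF R.lhs ∪ atmsF R.rhs
def Rule.unkn (R : Rule) : Finset Unknown := ctxUnkns R.ctx ∪ unknF R.lhs ∪ unknF R.rhs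

/-- `Δ ⊢ ∇θ`: every constraint of `∇`, instantiated by `θ`, is derivable from `Δ`. -/
def FreshSubst (Δ N : Ctx) (θ : Subst) : Prop :=
  ∀ p ∈ N, Fresh Δ p.1 (subst θ (.var FinPerm.id p.2))

/-- One-step nominal rewriting with the rule `R` in context `Δ`. -/
def OneStepR (R : Rule) (Δ : Ctx) (s t : Term) : Prop :=
  ∃ (C : Position) (s' : Term) (π : FinPerm) (θ : Subst),
    s = C.fill s' ∧ FreshSubst Δ R.ctx θ ∧
    Aeq Δ s' (permAct π (subst θ R.lhs)) ∧
    Aeq Δ (C.fill (permAct π (subst θ R.rhs))) t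

def OneStep (Rw : Set Rule) (Δ : Ctx) (s t : Term) : Prop := ∃ R ∈ Rw, OneStepR R Δ s t

/-- `Δ ⊢_R s ↔* t`: the reflexive-symmetric-transitive closure, including
α-equivalence, of one-step rewriting. -/
inductive RewEq (Rw : Set Rule) (Δ : Ctx) : Term → Term → Prop where
  | step {s t} : OneStep Rw Δ s t → RewEq Rw Δ s t
  | alpha {s t} : Aeq Δ s t → RewEq Rw Δ s t
  | symm {s t} : RewEq Rw Δ s t → RewEq Rw Δ t s
  | trans {s t u} : RewEq Rw Δ s t → RewEq Rw Δ t u → RewEq Rw Δ s u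

/-- Atoms of a judgement `(Δ, s, t)`. -/
noncomputable def judgeAtms (Δ : Ctx) (s t : Term) : Finset Atom := ctxAtoms Δ ∪ atmsF s ∪ atmsF t

def judgeUnkn (Δ : Ctx) (s t : Term) : Finset Unknown := ctxUnkns Δ ∪ unknF s ∪ unknF t

/-- `Γ` is a fresh context for a set of atoms `A`: its atoms avoid `A`. -/
def FreshFor (Γ : Ctx) (A : Finset Atom) : Prop := ∀ p ∈ Γ, p.1 ∉ A

/-- Nominal algebra equality `Δ ⊢_T s = t`. -/
inductive AlgEq (T : Set Rule) (Δ : Ctx) : Term → Term → Prop where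
  | axm {s t} (R : Rule) (hR : R ∈ T) (Γ : Ctx) (C : Position) (π : FinPerm) (θ : Subst) :
      FreshFor Γ (judgeAtms Δ s t) →
      FreshSubst (Δ ∪ Γ) R.ctx θ →
      Aeq (Δ ∪ Γ) s (C.fill (permAct π (subst θ R.lhs))) →
      Aeq (Δ ∪ Γ) (C.fill (permAct π (subst θ R.rhs))) t →
      AlgEq T Δ s t
  | refl (s) : AlgEq T Δ s s
  | symm {s t} : AlgEq T Δ s t → AlgEq T Δ t s
  | trans {s t u} : AlgEq T Δ s t → AlgEq T Δ t u → AlgEq T Δ s u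

/-- `Rw` is a presentation of the equational theory `T`. -/
def Presents (Rw : Set Rule) (T : Set Rule) : Prop :=
  ∀ R : Rule, R ∈ T ↔ (R ∈ Rw ∨ Rule.mk R.ctx R.rhs R.lhs ∈ Rw)

/-- Structural renaming of atoms (by a permutation `τ`) and unknowns (by `ρ`). -/
def renameT (τ : FinPerm) (ρ : Unknown → Unknown) : Term → Term
  | .atom a => .atom (τ a)
  | .var π X => .var (τ.comp (π.comp τ.inv)) (ρ X)
  | .abs a t => .abs (τ a) (renameT τ ρ t)
  | .app f ts => .app f (ts.attach.map fun t => renameT τ ρ t.1)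
decreasing_by
  all_goals simp_wf
  have := List.sizeOf_lt_of_mem t.2
  omega

def renameCtx (τ : FinPerm) (ρ : Unknown → Unknown) (Δ : Ctx) : Ctx :=
  Δ.image (fun p => (τ p.1, ρ p.2))

def Rule.rename (τ : FinPerm) (ρ : Unknown → Unknown) (R : Rule) : Rule :=
  ⟨renameCtx τ ρ R.ctx, renameT τ ρ R.lhs, renameT τ ρ R.rhs⟩

/-- `R'` is a freshened variant of `R`, avoiding also the atoms `A` and unknowns `U`. -/
def FreshenedVariant (A : Finset Atom) (U : Finset Unknown) (R R' : Rule) : Prop :=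
  ∃ (τ : FinPerm) (ρ : Equiv.Perm Unknown),
    R' = R.rename τ ρ ∧
    (∀ a ∈ R.atms, τ a ∉ A ∪ R.atms) ∧
    (∀ X ∈ R.unkn, (ρ X) ∉ U ∪ R.unkn)

/-- A rule (or axiom) `∇ ⊢ l → r` is closed: a freshened variant of `∇ ⊢ (l,r)` matches
`∇ ⊢ (l,r)` in the context `∇` extended with `atms(R') # unkn(R)`. -/
def Rule.Closed (R : Rule) : Prop :=
  ∃ R' : Rule, FreshenedVariant ∅ ∅ R R' ∧
    ∃ σ : Subst, (∀ X, X ∉ R'.unkn → σ X = .var FinPerm.id X) ∧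
      FreshSubst (R.ctx ∪ R'.atms ×ˢ R.unkn) R'.ctx σ ∧
      Aeq (R.ctx ∪ R'.atms ×ˢ R.unkn) (subst σ R'.lhs) R.lhs ∧
      Aeq (R.ctx ∪ R'.atms ×ˢ R.unkn) (subst σ R'.rhs) R.rhs

/-- One-step closed rewriting `Δ ⊢ s →c_R t`. -/
def ClosedStepR (R : Rule) (Δ : Ctx) (s t : Term) : Prop :=
  ∃ R' : Rule, FreshenedVariant (judgeAtms Δ s t ∪ R.atms) (judgeUnkn Δ s t ∪ R.unkn) R R' ∧
    ∃ (C : Position) (s' : Term) (θ : Subst),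
      s = C.fill s' ∧
      FreshSubst (Δ ∪ R'.atms ×ˢ judgeUnkn Δ s t) R'.ctx θ ∧
      Aeq (Δ ∪ R'.atms ×ˢ judgeUnkn Δ s t) s' (subst θ R'.lhs) ∧
      Aeq (Δ ∪ R'.atms ×ˢ judgeUnkn Δ s t) (C.fill (subst θ R'.rhs)) t

def ClosedStep (Rw : Set Rule) (Δ : Ctx) (s t : Term) : Prop := ∃ R ∈ Rw, ClosedStepR R Δ s t

/-- `Δ ⊢_R s ↔c* t`: reflexive-symmetric-transitive closure, including α-equivalence,
of one-step closed rewriting. -/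
inductive ClosedRewEq (Rw : Set Rule) (Δ : Ctx) : Term → Term → Prop where
  | step {s t} : ClosedStep Rw Δ s t → ClosedRewEq Rw Δ s t
  | alpha {s t} : Aeq Δ s t → ClosedRewEq Rw Δ s t
  | symm {s t} : ClosedRewEq Rw Δ s t → ClosedRewEq Rw Δ t s
  | trans {s t u} : ClosedRewEq Rw Δ s t → ClosedRewEq Rw Δ t u → ClosedRewEq Rw Δ s u

/-! Induction on the derivation of `Δ' ⊢ s ≈α t`. Substitution commutes with the permutation
action and, under `Δ ⊢ Δ'σ`, carries `Δ'`-freshness to `Δ`-freshness, which handles the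
abstraction rules. The only real case is `π·X ≈α π'·X`: every atom on which `π` and `π'` differ is
fresh for `Xσ`, and two permutations that agree except on atoms fresh for a term `t` send `t` to
α-equivalent terms. -/

namespace FinPerm

@[simp] theorem comp_apply (π π' : FinPerm) (a : Atom) : (π.comp π' : Atom → Atom) a = π (π' a) :=
  rfl

@[simp] theorem id_apply (a : Atom) : (FinPerm.id : Atom → Atom) a = a := rfl

@[simp] theorem inv_apply (π : FinPerm) (a : Atom) : (π.inv : Atom → Atom) a = π.1.symm a := rfl

end FinPerm

theorem Equiv.Perm.ne_and_ne_of_swap_apply_ne {α : Type*} [DecidableEq α] {π π' : Equiv.Perm α}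
    {a b : α} (h : Equiv.swap (π' a) (π a) (π b) ≠ π' b) : π b ≠ π' b ∧ b ≠ a := by
  have hba : b ≠ a := by
    rintro rfl
    exact h (Equiv.swap_apply_right _ _)
  refine ⟨fun hπ => h ?_, hba⟩
  rw [hπ]
  exact Equiv.swap_apply_of_ne_of_ne (π'.injective.ne hba) (hπ ▸ π.injective.ne hba)

theorem permAct_app (π : FinPerm) (f : ℕ) (ts : List Term) :
    permAct π (.app f ts) = .app f (ts.map (permAct π)) := by
  rw [permAct]
  simp

theorem subst_app (σ : Subst) (f : ℕ) (ts : List Term) :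
    subst σ (.app f ts) = .app f (ts.map (subst σ)) := by
  rw [subst]
  simp

theorem permAct_comp (π π' : FinPerm) (t : Term) :
    permAct π (permAct π' t) = permAct (π.comp π') t := by
  match t with
  | .atom a => simp [permAct]
  | .var π'' X => simp only [permAct]; rfl
  | .abs a t => simp [permAct, permAct_comp π π' t]
  | .app f ts =>
      simp only [permAct_app, List.map_map]
      exact congrArg _ (List.map_congr_left fun t _ => permAct_comp π π' t)

theorem subst_permAct (σ : Subst) (π : FinPerm) (t : Term) :
    subst σ (permAct π t) = permAct π (subst σ t) := by
  match t with
  | .atom a => simp [permAct, subst]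
  | .var π' X => simp [permAct, subst, permAct_comp]
  | .abs a t => simp [permAct, subst, subst_permAct σ π t]
  | .app f ts =>
      simp only [permAct_app, subst_app, List.map_map]
      exact congrArg _ (List.map_congr_left fun t _ => subst_permAct σ π t)

theorem permAct_id (t : Term) : permAct FinPerm.id t = t := by
  match t with
  | .atom a => simp [permAct]
  | .var π X => simp only [permAct]; rfl
  | .abs a t => simp [permAct, permAct_id t]
  | .app f ts =>
      rw [permAct_app]
      exact congrArg _ ((List.map_congr_left fun t _ => permAct_id t).trans ts.map_id)

theorem subst_var_id (σ : Subst) (X : Unknown) : subst σ (.var FinPerm.id X) = σ X := by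
  rw [subst, permAct_id]

namespace Fresh

variable {Δ : Ctx} {a : Atom} {t : Term}

theorem of_abs {b : Atom} (h : Fresh Δ a (.abs b t)) (hab : a ≠ b) : Fresh Δ a t := by
  cases h with
  | absSame => exact absurd rfl hab
  | absDiff _ ht => exact ht

theorem permAct (π : FinPerm) (h : Fresh Δ a t) : Fresh Δ (π a) (permAct π t) := by
  induction h with
  | atom hne =>
      rw [_root_.permAct]
      exact atom (π.1.injective.ne hne)
  | var hmem =>
      rw [_root_.permAct]
      exact var (by simpa [FinPerm.comp, FinPerm.inv] using hmem)
  | absSame =>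
      rw [_root_.permAct]
      exact absSame
  | absDiff hne _ ih =>
      rw [_root_.permAct]
      exact absDiff (π.1.injective.ne hne) ih
  | app _ ih =>
      rw [permAct_app]
      exact app (by simpa using ih)

theorem subst {Δ' : Ctx} {σ : Subst} (hσ : FreshSubst Δ Δ' σ) (h : Fresh Δ' a t) :
    Fresh Δ a (_root_.subst σ t) := by
  induction h with
  | atom hne =>
      rw [_root_.subst]
      exact atom hne
  | @var π X hmem =>
      rw [_root_.subst]
      have hX := (hσ _ hmem).permAct π
      rwa [subst_var_id, FinPerm.inv_apply, Equiv.apply_symm_apply] at hX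
  | absSame =>
      rw [_root_.subst]
      exact absSame
  | absDiff hne _ ih =>
      rw [_root_.subst]
      exact absDiff hne ih
  | app _ ih =>
      rw [subst_app]
      exact app (by simpa using ih)

end Fresh

theorem Aeq.permAct_of_fresh {Δ : Ctx} (t : Term) (π π' : FinPerm)
    (h : ∀ a, (π : Atom → Atom) a ≠ π' a → Fresh Δ a t) : Aeq Δ (permAct π t) (permAct π' t) := by
  induction t using permAct.induct generalizing π π' with
  | case1 a =>
      rw [permAct, permAct]
      by_cases he : (π : Atom → Atom) a = π' a
      · exact he ▸ atom
      · cases h a he with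
        | atom hne => exact absurd rfl hne
  | case2 π₀ X =>
      rw [permAct, permAct]
      refine var fun a ha => ?_
      cases h (π₀ a) ha with
      | var hmem => simpa using hmem
  | case3 a t ih =>
      rw [permAct, permAct]
      by_cases he : (π : Atom → Atom) a = π' a
      · refine he ▸ absSame (ih π π' fun b hb => (h b hb).of_abs ?_)
        rintro rfl
        exact hb he
      · -- `b := π⁻¹(π' a)` is moved, so it is fresh for `t`; its image `π' a` is fresh for `π·t`.
        obtain ⟨b, hb⟩ : ∃ b, (π : Atom → Atom) b = π' a := ⟨π.1.symm (π' a), π.1.apply_symm_apply _⟩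
        have hba : b ≠ a := by
          rintro rfl
          exact he hb
        have hmoved : (π : Atom → Atom) b ≠ π' b := hb ▸ (π'.1.injective.ne hba).symm
        refine absDiff he (hb ▸ ((h b hmoved).of_abs hba).permAct π) ?_
        rw [permAct_comp]
        refine ih _ _ fun c hc => ?_
        obtain ⟨hmoved, hca⟩ := Equiv.Perm.ne_and_ne_of_swap_apply_ne hc
        exact (h c hmoved).of_abs hca
  | case4 f ts ih =>
      rw [permAct_app, permAct_app]
      refine app (by simp) fun p hp => ?_
      rw [List.zip_map', List.mem_map] at hp
      obtain ⟨x, hx, rfl⟩ := hp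
      refine ih ⟨x, hx⟩ π π' fun b hb => ?_
      cases h b hb with
      | app hf => exact hf x hx

/-- Weakening/substitutivity for α-equivalence: if `Δ ⊢ Δ'σ` then `Δ' ⊢ s ≈α t` implies
`Δ ⊢ sσ ≈α tσ`. -/
theorem aeq_weakening (Δ Δ' : Ctx) (σ : Subst) (hσ : σ.FinDom)
    (h : FreshSubst Δ Δ' σ) (s t : Term) (hst : Aeq Δ' s t) :
    Aeq Δ (subst σ s) (subst σ t) := by
  induction hst with
  | atom =>
      rw [subst]
      exact Aeq.atom
  | @var π π' X hmem =>
      rw [subst, subst]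
      exact Aeq.permAct_of_fresh _ π π' fun a ha => subst_var_id σ X ▸ h _ (hmem a ha)
  | absSame _ ih =>
      rw [subst, subst]
      exact Aeq.absSame ih
  | absDiff hne hf _ ih =>
      rw [subst, subst]
      refine Aeq.absDiff hne (hf.subst h) ?_
      rwa [← subst_permAct]
  | @app f ts us hlen _ ih =>
      rw [subst_app, subst_app]
      refine Aeq.app (by simp [hlen]) fun p hp => ?_
      rw [List.zip_map, List.mem_map] at hp
      obtain ⟨q, hq, rfl⟩ := hp
      exact ih q hq
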